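/- Let θ be a positive random variable with μ := E[θ] ∈ (1,∞) and E[θ log⁺θ] < ∞. Then ∑_{n≥1} E[|θ − μ| · 1{|θ−μ| > μ^n}] < ∞. -/
import Mathlib


open MeasureTheory ProbabilityTheory

/-- Monotonicity of `t ↦ t * log⁺ t` on `[0, ∞)`. -/
lemma xlog_mono {a b : ℝ} (ha : 0 ≤ a) (hab : a ≤ b) :
    a * max (Real.log a) 0 ≤ b * max (Real.log b) 0 := by
  have hmax : max (Real.log a) 0 ≤ max (Real.log b) 0 := by
    rcases le_or_gt (Real.log a) 0 with h | h
    · simp [h, le_max_right]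
    · have ha1 : 0 < a := by
        rcases ha.lt_or_eq with h' | h'
        · exact h'
        · exfalso; rw [← h', Real.log_zero] at h; exact lt_irrefl 0 h
      exact max_le_max (Real.log_le_log ha1 hab) le_rfl
  exact mul_le_mul hab hmax (le_max_right _ _) (ha.trans hab)

/-- If `θ > 0`, `μ = E θ ∈ (1,∞)` and `E[θ log⁺ θ] < ∞`, then
`∑_{n ≥ 1} E[|θ - μ| 1{|θ-μ| > μ^n}] < ∞`. (Index `n : ℕ` corresponds to `n+1 ≥ 1`.) -/
theorem stmt2 {Ω : Type*} [MeasureSpace Ω] [IsProbabilityMeasure (ℙ : Measure Ω)]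
    (θ : Ω → ℝ) (hθmeas : Measurable θ) (hθpos : ∀ ω, 0 < θ ω)
    (hθint : Integrable θ) (μ : ℝ) (hμ : μ = ∫ ω, θ ω) (hμgt : 1 < μ)
    (hlog : Integrable (fun ω => θ ω * max (Real.log (θ ω)) 0)) :
    Summable (fun n : ℕ =>
      ∫ ω, Set.indicator {ω' | μ ^ (n + 1) < |θ ω' - μ|} (fun ω' => |θ ω' - μ|) ω) := by
  have hμpos : 0 < μ := lt_trans one_pos hμgt
  set c := Real.log μ with hc
  have hcpos : 0 < c := Real.log_pos hμgt
  set X : Ω → ℝ := fun ω => |θ ω - μ| with hX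
  have hXnn : ∀ ω, 0 ≤ X ω := fun ω => abs_nonneg _
  have hXmeas : Measurable X := (hθmeas.sub measurable_const).abs
  have hXint : Integrable X := (hθint.sub (integrable_const μ)).abs
  set C : ℝ := (μ ^ 2) * max (Real.log (μ ^ 2)) 0 with hCdef
  -- pointwise bound X log⁺ X ≤ C + θ log⁺ θ
  have key : ∀ ω, X ω * max (Real.log (X ω)) 0 ≤ C + θ ω * max (Real.log (θ ω)) 0 := by
    intro ω
    have hθnn : 0 ≤ θ ω := (hθpos ω).le
    have hlognn : 0 ≤ θ ω * max (Real.log (θ ω)) 0 :=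
      mul_nonneg hθnn (le_max_right _ _)
    have hCnn : 0 ≤ C := mul_nonneg (by positivity) (le_max_right _ _)
    rcases le_or_gt (θ ω) (μ ^ 2) with hcase | hcase
    · -- X ≤ μ^2
      have hXle : X ω ≤ μ ^ 2 := by
        show |θ ω - μ| ≤ μ ^ 2
        rw [abs_le]
        constructor <;> nlinarith
      have := xlog_mono (hXnn ω) hXle
      linarith
    · -- θ ω > μ^2 > μ so X = θ - μ ≤ θ
      have hXle : X ω ≤ θ ω := by
        show |θ ω - μ| ≤ θ ω
        have hμθ : μ < θ ω := lt_trans (by nlinarith) hcase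
        rw [abs_of_nonneg (by linarith)]
        linarith
      have := xlog_mono (hXnn ω) hXle
      linarith
  set h : Ω → ℝ := fun ω => (C + θ ω * max (Real.log (θ ω)) 0) / c with hh
  have hhint : Integrable h := ((integrable_const C).add hlog).div_const c
  -- per-term integrands
  set f : ℕ → Ω → ℝ :=
    fun n ω => Set.indicator {ω' | μ ^ (n + 1) < |θ ω' - μ|} (fun ω' => |θ ω' - μ|) ω with hf
  have hsetmeas : ∀ n : ℕ, MeasurableSet {ω' | μ ^ (n + 1) < |θ ω' - μ|} := by
    intro n
    exact measurableSet_lt measurable_const hXmeas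
  have hfint : ∀ n, Integrable (f n) := fun n => hXint.indicator (hsetmeas n)
  have hfnn : ∀ n ω, 0 ≤ f n ω := by
    intro n ω
    exact Set.indicator_nonneg (fun ω' _ => abs_nonneg _) ω
  -- pointwise partial-sum bound
  have hsum_le : ∀ (N : ℕ) (ω : Ω), ∑ n ∈ Finset.range N, f n ω ≤ h ω := by
    intro N ω
    set L : ℝ := max (Real.log (X ω)) 0 / c with hL
    have hLnn : 0 ≤ L := div_nonneg (le_max_right _ _) hcpos.le
    have hmem : ∀ n ∈ Finset.range N, μ ^ (n + 1) < X ω → (n : ℕ) < ⌊L⌋₊ := by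
      intro n _ hn
      have hlog' : ((n : ℝ) + 1) * c < Real.log (X ω) := by
        have := Real.log_lt_log (pow_pos hμpos (n + 1)) hn
        rwa [Real.log_pow, Nat.cast_add, Nat.cast_one] at this
      have hle : ((n : ℝ) + 1) ≤ L := by
        rw [hL, le_div_iff₀ hcpos]
        exact le_trans hlog'.le (le_max_left _ _)
      have hfl : n + 1 ≤ ⌊L⌋₊ := Nat.le_floor (by push_cast; linarith)
      omega
    -- rewrite sum as card • X ω
    have hsum_eq : ∑ n ∈ Finset.range N, f n ω
        = ((Finset.range N).filter (fun n => μ ^ (n + 1) < X ω)).card • X ω := by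
      rw [← Finset.sum_const]
      rw [Finset.sum_filter]
      apply Finset.sum_congr rfl
      intro n _
      simp only [hf, hX, Set.indicator_apply, Set.mem_setOf_eq]
    have hsub : (Finset.range N).filter (fun n => μ ^ (n + 1) < X ω)
        ⊆ Finset.range ⌊L⌋₊ := by
      intro n hn
      rw [Finset.mem_filter] at hn
      exact Finset.mem_range.mpr (hmem n hn.1 hn.2)
    have hcardnat : ((Finset.range N).filter (fun n => μ ^ (n + 1) < X ω)).card ≤ ⌊L⌋₊ :=
      (Finset.card_le_card hsub).trans (le_of_eq (Finset.card_range _))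
    have hcard : (((Finset.range N).filter (fun n => μ ^ (n + 1) < X ω)).card : ℝ) ≤ L :=
      le_trans (by exact_mod_cast hcardnat) (Nat.floor_le hLnn)
    rw [hsum_eq, nsmul_eq_mul]
    calc (((Finset.range N).filter (fun n => μ ^ (n + 1) < X ω)).card : ℝ) * X ω
        ≤ L * X ω := mul_le_mul_of_nonneg_right hcard (hXnn ω)
      _ ≤ h ω := by
          rw [hh, hL]
          show max (Real.log (X ω)) 0 / c * X ω ≤ (C + θ ω * max (Real.log (θ ω)) 0) / c
          rw [div_mul_eq_mul_div, mul_comm]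
          exact div_le_div_of_nonneg_right (key ω) hcpos.le
  have hgoal : ∀ N : ℕ, ∑ n ∈ Finset.range N, (∫ ω, f n ω) ≤ ∫ ω, h ω := by
    intro N
    rw [← integral_finset_sum _ (fun n _ => hfint n)]
    exact integral_mono (integrable_finset_sum _ (fun n _ => hfint n)) hhint
      (fun ω => hsum_le N ω)
  exact summable_of_sum_range_le (fun n => integral_nonneg (hfnn n)) hgoal
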